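/- arXiv:1602.08365 — 2 statements merged into one kernel-verified Lean document; each statement's English description precedes it below -/
import Mathlib

section
/- Let 0 ≤ k, ℓ ≤ r, let b − a = d − c = h > 0, and let F ∈ C^{m_k+1,n_ℓ+1}([a,b]×[c,d]) (all mixed partials F^{(i,j)} with i ≤ m_k+1, j ≤ n_ℓ+1 continuous). Then ‖F − (𝐏_{m_k} ⊕ 𝐐_{n_ℓ})F‖_{∞,[a,b]×[c,d]} ≤ K_{m_k,n_ℓ}(F)·h^{m_k+n_ℓ+2}, where K_{m,n}(F) := (1 + ‖𝐏_m ⊕ 𝐐_n‖)·‖F^{(m+1,n+1)}‖_{∞,[a,b]×[c,d]} / ( 2^{m+n+2}·(m+1)!·(n+1)! ) and ‖L‖ := sup{‖LG‖_{∞} : G ∈ C([a,b]×[c,d]), ‖G‖_∞ ≤ 1}. -/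
open scoped BigOperators

noncomputable section

/-- Sup norm `‖f‖_{∞,S}` of a function over a set `S`. -/
def supN {α : Type*} (S : Set α) (f : α → ℝ) : ℝ := ⨆ z : S, |f z.1|

/-- Operator norm of `L` over continuous functions on `R` with sup norm `≤ 1`. -/
def opN {α : Type*} [TopologicalSpace α] (R : Set α) (L : (α → ℝ) → α → ℝ) : ℝ :=
  ⨆ G : {G : α → ℝ // ContinuousOn G R ∧ supN R G ≤ 1}, supN R (L G.1)

/-- Bernstein basis function `B_i^m` scaled to `[a,b]`. -/
def bern (m : ℕ) (a b : ℝ) (i : ℕ) : ℝ → ℝ := fun x =>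
  (m.choose i : ℝ) * ((b - x) / (b - a)) ^ (m - i) * ((x - a) / (b - a)) ^ i

/-- Uniform node `x_i^m = a + (i/m)(b-a)`. -/
def node (m : ℕ) (a b : ℝ) (i : ℕ) : ℝ := a + (i : ℝ) / (m : ℝ) * (b - a)

/-- Bernstein collocation matrix `T_m = (B_j^m(x_i^m))_{ij}`. -/
def Tmat (m : ℕ) (a b : ℝ) : Matrix (Fin (m + 1)) (Fin (m + 1)) ℝ := fun i j =>
  bern m a b j (node m a b i)

/-- Dual functionals `λ_j^m f = (T_m⁻¹ · (f(x_i^m))_i)_j`. -/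
def lam (m : ℕ) (a b : ℝ) (j : Fin (m + 1)) (f : ℝ → ℝ) : ℝ :=
  (Tmat m a b)⁻¹.mulVec (fun i => f (node m a b i)) j

/-- `λ_j^m` with a natural-number index (zero out of range). -/
def lamN (m : ℕ) (a b : ℝ) (j : ℕ) (f : ℝ → ℝ) : ℝ :=
  if h : j < m + 1 then lam m a b ⟨j, h⟩ f else 0

/-- The index map `α^k : i ↦ i·(m_r/m_k)` (when `m_k ∣ m_r` and `i ≤ m_k` the `min` is inert). -/
def alphaF (mk mr : ℕ) (i : Fin (mk + 1)) : Fin (mr + 1) :=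
  ⟨min (i.1 * (mr / mk)) mr, Nat.lt_succ_of_le (min_le_right _ _)⟩

/-- Degree elevation matrix `E_{m_k}^{m_r} = (λ_i^{m_r}(B_j^{m_k}))_{ij}`. -/
def Emat (mk mr : ℕ) (a b : ℝ) : Matrix (Fin (mr + 1)) (Fin (mk + 1)) ℝ := fun i j =>
  lam mr a b i (bern mk a b j)

/-- Row submatrix `E_{m_k}^{m_r}(α^k,:)`. -/
def Esub (mk mr : ℕ) (a b : ℝ) : Matrix (Fin (mk + 1)) (Fin (mk + 1)) ℝ := fun i j =>
  Emat mk mr a b (alphaF mk mr i) j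

/-- Dual basis polynomials `D_j^{m_k} = Σ_ℓ (E(α^k,:)⁻¹)_{ℓ j} B_ℓ^{m_k}`. -/
def Dq (mk mr : ℕ) (a b : ℝ) (j : Fin (mk + 1)) : ℝ → ℝ := fun x =>
  ∑ l : Fin (mk + 1), (Esub mk mr a b)⁻¹ l j * bern mk a b l x

/-- `D_j^{m_k}` with a natural-number index (zero out of range). -/
def DqN (mk mr : ℕ) (a b : ℝ) (j : ℕ) : ℝ → ℝ :=
  if h : j < mk + 1 then Dq mk mr a b ⟨j, h⟩ else 0

/-- Functionals `μ_i^{m_k} = λ_{α^k_i}^{m_r}`. -/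
def mu (mk mr : ℕ) (a b : ℝ) (i : Fin (mk + 1)) (f : ℝ → ℝ) : ℝ :=
  lam mr a b (alphaF mk mr i) f

/-- Univariate quasi-interpolant `P_{m_k} f = Σ_i (μ_i^{m_k} f)·D_i^{m_k}`. -/
def Pop (mk mr : ℕ) (a b : ℝ) (f : ℝ → ℝ) : ℝ → ℝ := fun x =>
  ∑ i : Fin (mk + 1), mu mk mr a b i f * Dq mk mr a b i x

/-- Bivariate extension `𝐏_{m_k} = P_{m_k} × I` (acting in the first variable). -/
def PP (mk mr : ℕ) (a b : ℝ) (F : ℝ × ℝ → ℝ) : ℝ × ℝ → ℝ := fun z =>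
  Pop mk mr a b (fun x => F (x, z.2)) z.1

/-- Bivariate extension `𝐐_{n_ℓ} = I × Q_{n_ℓ}` (acting in the second variable). -/
def QQ (nl nr : ℕ) (c d : ℝ) (F : ℝ × ℝ → ℝ) : ℝ × ℝ → ℝ := fun z =>
  Pop nl nr c d (fun y => F (z.1, y)) z.2

/-- Maximum absolute row sum matrix norm. -/
def rowNorm {p q : ℕ} (A : Matrix (Fin p) (Fin q) ℝ) : ℝ := ⨆ i : Fin p, ∑ j, |A i j|

/-- `C_{m_r} = max_i sup{ |λ_i^{m_r} f| : f ∈ C[a,b], ‖f‖_∞ ≤ 1 }`. -/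
def Cbase (mr : ℕ) (a b : ℝ) : ℝ :=
  ⨆ i : Fin (mr + 1),
    ⨆ f : {f : ℝ → ℝ // ContinuousOn f (Set.Icc a b) ∧ supN (Set.Icc a b) f ≤ 1},
      |lam mr a b i f.1|

/-- `C_{m_r,m_k} = C_{m_r}·(m_k+1)·‖E_{m_k}^{m_r}(α^k,:)⁻¹‖_∞`. -/
def Cconst (mk mr : ℕ) (a b : ℝ) : ℝ :=
  Cbase mr a b * ((mk : ℝ) + 1) * rowNorm (Esub mk mr a b)⁻¹

/-- `Π_m`: univariate polynomial functions of degree at most `m`. -/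
def polyF (m : ℕ) : Submodule ℝ (ℝ → ℝ) :=
  Submodule.span ℝ {f : ℝ → ℝ | ∃ i ≤ m, f = fun x => x ^ i}

/-- `Π_p ⊗ Π_q`: bivariate polynomial functions of degree `≤ p` in `x` and `≤ q` in `y`. -/
def polyF2 (p q : ℕ) : Submodule ℝ (ℝ × ℝ → ℝ) :=
  Submodule.span ℝ {F : ℝ × ℝ → ℝ | ∃ i ≤ p, ∃ j ≤ q, F = fun z => z.1 ^ i * z.2 ^ j}

/-- `S_{𝐦,𝐧} = Σ_{k=0}^r Π_{m_k} ⊗ Π_{n_{r-k}}` (as a space of functions). -/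
def SmnF (r : ℕ) (m n : ℕ → ℕ) : Submodule ℝ (ℝ × ℝ → ℝ) :=
  ∑ k ∈ Finset.range (r + 1), polyF2 (m k) (n (r - k))

/-- `Π_p ⊗ Π_q` inside the bivariate polynomial ring. -/
def PiTP (p q : ℕ) : Submodule ℝ (MvPolynomial (Fin 2) ℝ) :=
  Submodule.span ℝ {P | ∃ i ≤ p, ∃ j ≤ q,
    P = MvPolynomial.monomial (Finsupp.single 0 i + Finsupp.single 1 j) (1 : ℝ)}

/-- `S_{𝐦,𝐧} = Σ_{k=0}^r Π_{m_k} ⊗ Π_{n_{r-k}}` in the bivariate polynomial ring. -/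
def SmnP (r : ℕ) (m n : ℕ → ℕ) : Submodule ℝ (MvPolynomial (Fin 2) ℝ) :=
  ∑ k ∈ Finset.range (r + 1), PiTP (m k) (n (r - k))

/-- The rectangle `[a,b] × [c,d]`. -/
def Rect (a b c d : ℝ) : Set (ℝ × ℝ) := Set.Icc a b ×ˢ Set.Icc c d

/-- `Fd` is a system of mixed partial derivatives of `Fd 0 0` of class `C^{p,q}` on the
rectangle: all mixed partials `F^{(i,j)}`, `i ≤ p`, `j ≤ q`, exist and are continuous. -/
def IsCpq (p q : ℕ) (a b c d : ℝ) (Fd : ℕ → ℕ → ℝ × ℝ → ℝ) : Prop :=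
  (∀ i < p, ∀ j ≤ q, ∀ z ∈ Rect a b c d,
      HasDerivWithinAt (fun x => Fd i j (x, z.2)) (Fd (i + 1) j z) (Set.Icc a b) z.1) ∧
  (∀ i ≤ p, ∀ j < q, ∀ z ∈ Rect a b c d,
      HasDerivWithinAt (fun y => Fd i j (z.1, y)) (Fd i (j + 1) z) (Set.Icc c d) z.2) ∧
  (∀ i ≤ p, ∀ j ≤ q, ContinuousOn (Fd i j) (Rect a b c d))

end

/-!
For every `S` reproduced by the linear operator `𝐏 ⊕ 𝐐`,
`F - (𝐏 ⊕ 𝐐) F = (F - S) - (𝐏 ⊕ 𝐐) (F - S)`, hence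
`‖F - (𝐏 ⊕ 𝐐) F‖ ≤ (1 + ‖𝐏 ⊕ 𝐐‖) ‖F - S‖`. The Boolean sum reproduces every sum of a polynomial
of degree `≤ m_k` in `x` and one of degree `≤ n_ℓ` in `y`, because `P_{m_k}` reproduces `Π_{m_k}`
once `E_{m_k}^{m_r}(α^k,:)` is invertible. It is: with `s = (x - a) / (b - a)`, the degree-`m_r`
Bernstein coefficients of `s ^ t` are `binom(j,t) / binom(m_r,t)`, a polynomial of degree `t` in
`j`, and the rows `α^k_i = i m_r / m_k` are distinct, so the matrix factors through a Vandermonde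
matrix. For `S` take the Boolean sum of the two Taylor projectors at the centre of the square:
`F - S = (I - T_x)(I - T_y) F` is a Taylor remainder in `x` of a Taylor remainder in `y`, of size
at most `‖F^{(m_k+1,n_ℓ+1)}‖ (h/2)^{m_k+n_ℓ+2} / ((m_k+1)! (n_ℓ+1)!)`.
-/
open Finset Matrix

section SupNorm

variable {α : Type*}

lemma supN_nonneg (S : Set α) (f : α → ℝ) : 0 ≤ supN S f :=
  Real.iSup_nonneg fun _ => abs_nonneg _

lemma supN_le {S : Set α} {f : α → ℝ} {c : ℝ} (hc : 0 ≤ c) (h : ∀ z ∈ S, |f z| ≤ c) :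
    supN S f ≤ c :=
  Real.iSup_le (fun z => h z z.2) hc

lemma abs_le_supN {S : Set α} {f : α → ℝ} {c : ℝ} (h : ∀ z ∈ S, |f z| ≤ c) {z : α} (hz : z ∈ S) :
    |f z| ≤ supN S f :=
  le_ciSup (f := fun z : S => |f z|) ⟨c, by rintro _ ⟨w, rfl⟩; exact h w w.2⟩ ⟨z, hz⟩

lemma abs_le_supN_of_continuousOn [TopologicalSpace α] {S : Set α} (hS : IsCompact S)
    {f : α → ℝ} (hf : ContinuousOn f S) {z : α} (hz : z ∈ S) : |f z| ≤ supN S f := by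
  obtain ⟨c, hc⟩ := hS.exists_bound_of_continuousOn hf
  exact abs_le_supN hc hz

def IsOpBound (R : Set α) (L : (α → ℝ) → α → ℝ) (C : ℝ) : Prop :=
  ∀ F M, (∀ z ∈ R, |F z| ≤ M) → ∀ z ∈ R, |L F z| ≤ C * M

namespace IsOpBound

variable {R : Set α} {L₁ L₂ : (α → ℝ) → α → ℝ} {C₁ C₂ : ℝ}

lemma add (h₁ : IsOpBound R L₁ C₁) (h₂ : IsOpBound R L₂ C₂) :
    IsOpBound R (fun F z => L₁ F z + L₂ F z) (C₁ + C₂) := fun F M hF z hz =>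
  (abs_add_le _ _).trans (by linarith [h₁ F M hF z hz, h₂ F M hF z hz])

lemma sub (h₁ : IsOpBound R L₁ C₁) (h₂ : IsOpBound R L₂ C₂) :
    IsOpBound R (fun F z => L₁ F z - L₂ F z) (C₁ + C₂) := fun F M hF z hz =>
  (abs_sub _ _).trans (by linarith [h₁ F M hF z hz, h₂ F M hF z hz])

lemma comp (h₁ : IsOpBound R L₁ C₁) (h₂ : IsOpBound R L₂ C₂) :
    IsOpBound R (fun F => L₁ (L₂ F)) (C₁ * C₂) := fun F M hF z hz => by
  simpa [mul_assoc] using h₁ _ _ (h₂ F M hF) z hz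

end IsOpBound

lemma abs_apply_le_opN [TopologicalSpace α] {R : Set α} (hR : IsCompact R)
    {L : (α → ℝ) → α → ℝ} {C : ℝ} (hL : IsOpBound R L C) {G : α → ℝ} (hGc : ContinuousOn G R)
    (hG : ∀ w ∈ R, |G w| ≤ 1) {z : α} (hz : z ∈ R) : |L G z| ≤ opN R L := by
  have hbdd : BddAbove (Set.range fun G : {G : α → ℝ // ContinuousOn G R ∧ supN R G ≤ 1} =>
      supN R (L G.1)) := by
    refine ⟨max C 0, ?_⟩
    rintro _ ⟨⟨G', hG'c, hG's⟩, rfl⟩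
    refine supN_le (le_max_right _ _) fun w hw => ?_
    have := hL G' 1 (fun u hu => (abs_le_supN_of_continuousOn hR hG'c hu).trans hG's) w hw
    linarith [le_max_left C 0]
  exact (abs_le_supN (hL G 1 hG) hz).trans (le_ciSup hbdd ⟨G, hGc, supN_le zero_le_one hG⟩)

/-- Lebesgue's inequality. -/
theorem supN_sub_le_of_apply_eq_self [TopologicalSpace α] {R : Set α} (hR : IsCompact R)
    (L : (α → ℝ) →ₗ[ℝ] α → ℝ) {C : ℝ} (hL : IsOpBound R L C) {F S : α → ℝ} (hS : L S = S)
    (hcont : ContinuousOn (F - S) R) {ε : ℝ} (hε0 : 0 ≤ ε) (hε : ∀ z ∈ R, |F z - S z| ≤ ε) :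
    supN R (fun z => F z - L F z) ≤ (1 + opN R L) * ε := by
  have hON : 0 ≤ opN R L := Real.iSup_nonneg fun _ => supN_nonneg _ _
  have hLE : ∀ z ∈ R, |L (F - S) z| ≤ opN R L * ε := by
    intro z hz
    rcases hε0.eq_or_lt with rfl | hpos
    · simpa using hL (F - S) 0 hε z hz
    have hG : ∀ w ∈ R, |(ε⁻¹ • (F - S)) w| ≤ 1 := fun w hw => by
      simpa [abs_mul, abs_of_pos hpos, inv_mul_le_iff₀ hpos] using hε w hw
    have hLG := abs_apply_le_opN hR hL (hcont.const_smul ε⁻¹) hG hz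
    rwa [map_smul, Pi.smul_apply, smul_eq_mul, abs_mul, abs_inv, abs_of_pos hpos,
      inv_mul_le_iff₀ hpos, mul_comm] at hLG
  refine supN_le (by positivity) fun z hz => ?_
  have hsplit : F z - L F z = (F - S) z - L (F - S) z := by
    simp [map_sub, hS]
  rw [hsplit]
  calc |(F - S) z - L (F - S) z| ≤ |(F - S) z| + |L (F - S) z| := abs_sub _ _
    _ ≤ ε + opN R L * ε := add_le_add (hε z hz) (hLE z hz)
    _ = (1 + opN R L) * ε := by ring

end SupNorm

section Bernstein

variable {a b : ℝ}

lemma sum_fin_eq_sum_range_of_eq_zero {m j : ℕ} (hj : j ≤ m) (g : ℕ → ℝ)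
    (hg : ∀ t < j, g t = 0) :
    ∑ t : Fin (m + 1), g t = ∑ u ∈ range (m - j + 1), g (j + u) := by
  rw [Fin.sum_univ_eq_sum_range g, ← sum_range_add_sum_Ico g (by omega : j ≤ m + 1),
    sum_eq_zero fun t ht => hg t (mem_range.mp ht), zero_add, sum_Ico_eq_sum_range,
    show m + 1 - j = m - j + 1 by omega]

lemma sub_div_sub_eq_one_sub (hab : a < b) (x : ℝ) :
    (b - x) / (b - a) = 1 - (x - a) / (b - a) := by
  field_simp [sub_ne_zero.mpr hab.ne']
  ring

/-- `bernMonomial m t j` is the coefficient of `s ^ t` in `C(m,j) (1 - s) ^ (m - j) s ^ j`. -/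
def bernMonomial (m : ℕ) : Matrix (Fin (m + 1)) (Fin (m + 1)) ℝ := of fun t j =>
  if j.1 ≤ t.1 then (-1) ^ (t.1 - j.1) * (m.choose j : ℝ) * ((m - j).choose (t - j) : ℝ) else 0

lemma bern_eq_sum_bernMonomial (hab : a < b) (m : ℕ) (j : Fin (m + 1)) (x : ℝ) :
    bern m a b j x = ∑ t : Fin (m + 1), bernMonomial m t j * ((x - a) / (b - a)) ^ t.1 := by
  set s := (x - a) / (b - a)
  have hj : j.1 ≤ m := Fin.is_le j
  simp only [bernMonomial, of_apply, ite_mul, zero_mul]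
  rw [sum_fin_eq_sum_range_of_eq_zero hj
    (fun t => if j.1 ≤ t then (-1) ^ (t - j.1) * (m.choose j : ℝ) * ((m - j).choose (t - j) : ℝ)
      * s ^ t else 0) fun t ht => by simp [not_le.mpr ht]]
  have hbern : bern m a b j x = (m.choose j : ℝ) * s ^ j.1 * (-s + 1) ^ (m - j) := by
    simp only [bern, sub_div_sub_eq_one_sub hab]
    ring
  simp only [le_add_iff_nonneg_right, zero_le, if_true, Nat.add_sub_cancel_left]
  rw [hbern, add_pow, mul_sum]
  refine sum_congr rfl fun u _ => ?_
  rw [neg_pow, pow_add, one_pow]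
  ring

lemma det_bernMonomial (m : ℕ) : (bernMonomial m).det = ∏ j : Fin (m + 1), (m.choose j : ℝ) := by
  rw [det_of_isLowerTriangular (bernMonomial m) fun i j (hij : i < j) => if_neg (not_le.mpr hij)]
  simp [bernMonomial]

lemma Tmat_eq_vandermonde_mul (hab : a < b) (m : ℕ) :
    Tmat m a b = vandermonde (fun i : Fin (m + 1) => (i : ℝ) / m) * bernMonomial m := by
  ext i j
  have hs : (node m a b i - a) / (b - a) = (i : ℝ) / m := by
    simp only [node, add_sub_cancel_left]
    field_simp [sub_ne_zero.mpr hab.ne']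
  simp only [Tmat, bern_eq_sum_bernMonomial hab, hs, mul_apply, vandermonde_apply, mul_comm]

lemma isUnit_det_Tmat (hab : a < b) (m : ℕ) : IsUnit (Tmat m a b).det := by
  rw [Tmat_eq_vandermonde_mul hab, det_mul, det_bernMonomial, isUnit_iff_ne_zero]
  refine mul_ne_zero (det_vandermonde_ne_zero_iff.mpr fun i j hij => ?_)
    (prod_ne_zero_iff.mpr fun j _ => by exact_mod_cast (Nat.choose_pos (Fin.is_le j)).ne')
  rcases Nat.eq_zero_or_pos m with rfl | hm
  · exact Fin.ext (by omega)
  · exact Fin.ext (by exact_mod_cast (div_left_inj' (by positivity : (m : ℝ) ≠ 0)).mp hij)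

lemma lam_eq_sum (m : ℕ) (j : Fin (m + 1)) (f : ℝ → ℝ) :
    lam m a b j f = ∑ i : Fin (m + 1), (Tmat m a b)⁻¹ j i * f (node m a b i) := rfl

lemma lam_sum_smul {ι : Type*} (s : Finset ι) (c : ι → ℝ) (g : ι → ℝ → ℝ) (m : ℕ)
    (j : Fin (m + 1)) : lam m a b j (∑ t ∈ s, c t • g t) = ∑ t ∈ s, c t * lam m a b j (g t) := by
  simp only [lam_eq_sum, Finset.sum_apply, Pi.smul_apply, smul_eq_mul, mul_sum]
  rw [sum_comm]
  exact sum_congr rfl fun _ _ => sum_congr rfl fun _ _ => by ring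

lemma lam_bern (hab : a < b) (m : ℕ) (j i : Fin (m + 1)) :
    lam m a b j (bern m a b i) = if j = i then 1 else 0 := by
  rw [← one_apply, ← nonsing_inv_mul _ (isUnit_det_Tmat hab m), mul_apply]
  rfl

lemma pow_eq_sum_bern (hab : a < b) {m t : ℕ} (ht : t ≤ m) :
    (fun x => ((x - a) / (b - a)) ^ t) =
      ∑ j : Fin (m + 1), ((j.1.choose t : ℝ) / m.choose t) • bern m a b j := by
  ext x
  simp only [Finset.sum_apply, Pi.smul_apply, smul_eq_mul]
  set s := (x - a) / (b - a)
  have hC : (m.choose t : ℝ) ≠ 0 := by exact_mod_cast (Nat.choose_pos ht).ne'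
  rw [sum_fin_eq_sum_range_of_eq_zero ht
    (fun j => ((j.choose t : ℝ) / m.choose t) * bern m a b j x) fun j hj => by
      simp [Nat.choose_eq_zero_of_lt hj]]
  have key : ∀ u ∈ range (m - t + 1), ((t + u).choose t : ℝ) / m.choose t * bern m a b (t + u) x
      = s ^ t * (s ^ u * (1 - s) ^ (m - t - u) * ((m - t).choose u : ℝ)) := by
    intro u hu
    have hu : u ≤ m - t := Nat.lt_succ_iff.mp (mem_range.mp hu)
    have hchoose : (m.choose (t + u) : ℝ) * ((t + u).choose t) = m.choose t * (m - t).choose u := by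
      have h := @Nat.choose_mul m (t + u) t (by omega)
      rw [Nat.add_sub_cancel_left] at h
      exact_mod_cast h
    rw [bern, sub_div_sub_eq_one_sub hab, show m - (t + u) = m - t - u by omega, div_mul_eq_mul_div,
      div_eq_iff hC]
    linear_combination (1 - s) ^ (m - t - u) * s ^ (t + u) * hchoose + 0 * pow_add s t u
  rw [sum_congr rfl key, ← mul_sum, ← add_pow, add_sub_cancel, one_pow, mul_one]

lemma lam_pow (hab : a < b) {m t : ℕ} (ht : t ≤ m) (j : Fin (m + 1)) :
    lam m a b j (fun x => ((x - a) / (b - a)) ^ t) = (j.1.choose t : ℝ) / m.choose t := by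
  simp [pow_eq_sum_bern hab ht, lam_sum_smul, lam_bern hab]

end Bernstein

section Elevation

variable {a b : ℝ} {mk mr : ℕ}

lemma alphaF_val (hdvd : mk ∣ mr) (i : Fin (mk + 1)) : (alphaF mk mr i : ℕ) = i * (mr / mk) :=
  min_eq_left ((Nat.mul_le_mul_right _ (Fin.is_le i)).trans (Nat.mul_div_cancel' hdvd).le)

lemma Esub_eq_mul (hab : a < b) (hdvd : mk ∣ mr) (hmr : 0 < mr) :
    Esub mk mr a b =
      (of fun i t : Fin (mk + 1) => (mr.choose t : ℝ)⁻¹ * ((i * (mr / mk)).choose t : ℝ)) *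
        bernMonomial mk := by
  ext i j
  have hbern : bern mk a b j =
      ∑ t : Fin (mk + 1), bernMonomial mk t j • fun x => ((x - a) / (b - a)) ^ t.1 := by
    ext x
    simp [bern_eq_sum_bernMonomial hab]
  have hle : mk ≤ mr := Nat.le_of_dvd hmr hdvd
  simp only [Esub, Emat, hbern, lam_sum_smul, mul_apply, of_apply]
  refine sum_congr rfl fun t _ => ?_
  rw [lam_pow hab ((Fin.is_le t).trans hle), alphaF_val hdvd, div_eq_inv_mul, mul_comm]

lemma det_choose_ne_zero {n : ℕ} {x : Fin n → ℕ} (hx : Function.Injective x) :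
    (of fun i t : Fin n => ((x i).choose t : ℝ)).det ≠ 0 := by
  have hv : (vandermonde fun i => (x i : ℝ)).det ≠ 0 :=
    det_vandermonde_ne_zero_iff.mpr fun i j h => hx (by exact_mod_cast h)
  rw [det_eval_matrixOfPolynomials_eq_det_vandermonde _ (fun t => descPochhammer ℝ t)
    (fun t => descPochhammer_natDegree ℝ t) (fun t => monic_descPochhammer ℝ t)] at hv
  have hrow :=
    det_mul_row (fun t : Fin n => (t.1.factorial : ℝ)) (of fun i t => ((x i).choose t : ℝ))
  simp only [of_apply] at hrow
  simp only [descPochhammer_eval_eq_descFactorial, Nat.descFactorial_eq_factorial_mul_choose,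
    Nat.cast_mul, hrow] at hv
  exact right_ne_zero_of_mul hv

lemma isUnit_det_Esub (hab : a < b) (hdvd : mk ∣ mr) (hmr : 0 < mr) :
    IsUnit (Esub mk mr a b).det := by
  have hle : mk ≤ mr := Nat.le_of_dvd hmr hdvd
  have hq : 0 < mr / mk := Nat.div_pos hle (Nat.pos_of_dvd_of_pos hdvd hmr)
  have hrow := det_mul_row (fun t : Fin (mk + 1) => (mr.choose t : ℝ)⁻¹)
    (of fun i t : Fin (mk + 1) => ((i * (mr / mk)).choose t : ℝ))
  simp only [of_apply] at hrow
  rw [Esub_eq_mul hab hdvd hmr, det_mul, hrow, det_bernMonomial, isUnit_iff_ne_zero]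
  refine mul_ne_zero (mul_ne_zero ?_ (det_choose_ne_zero fun i j h => ?_)) ?_
  · exact prod_ne_zero_iff.mpr fun t _ =>
      inv_ne_zero (by exact_mod_cast (Nat.choose_pos ((Fin.is_le t).trans hle)).ne')
  · exact Fin.ext (Nat.eq_of_mul_eq_mul_right hq h)
  · exact prod_ne_zero_iff.mpr fun j _ => by exact_mod_cast (Nat.choose_pos (Fin.is_le j)).ne'

end Elevation

section QuasiInterpolant

variable {a b : ℝ} {mk mr : ℕ}

lemma node_mem_Icc (hab : a ≤ b) {m i : ℕ} (hi : i ≤ m) : node m a b i ∈ Set.Icc a b := by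
  have h1 : (i : ℝ) / m ≤ 1 := div_le_one_of_le₀ (by exact_mod_cast hi) (Nat.cast_nonneg m)
  have h0 : 0 ≤ (i : ℝ) / m := by positivity
  constructor <;> simp only [node] <;> nlinarith

noncomputable def popWeight (mk mr : ℕ) (a b : ℝ) (i' : Fin (mr + 1)) : ℝ → ℝ := fun x =>
  ∑ i : Fin (mk + 1), (Tmat mr a b)⁻¹ (alphaF mk mr i) i' * Dq mk mr a b i x

lemma Pop_eq_sum_node (f : ℝ → ℝ) (x : ℝ) :
    Pop mk mr a b f x = ∑ i' : Fin (mr + 1), popWeight mk mr a b i' x * f (node mr a b i') := by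
  simp only [Pop, mu, lam_eq_sum, popWeight, sum_mul]
  rw [sum_comm]
  exact sum_congr rfl fun _ _ => sum_congr rfl fun _ _ => by ring

lemma continuous_popWeight (i' : Fin (mr + 1)) : Continuous (popWeight mk mr a b i') := by
  unfold popWeight Dq bern
  fun_prop

noncomputable def quasiInterp (mk mr : ℕ) (a b : ℝ) : (ℝ → ℝ) →ₗ[ℝ] ℝ → ℝ where
  toFun := Pop mk mr a b
  map_add' f g := by ext x; simp [Pop_eq_sum_node, mul_add, sum_add_distrib]
  map_smul' c f := by
    ext x
    simp only [Pop_eq_sum_node, Pi.smul_apply, smul_eq_mul, RingHom.id_apply, mul_sum]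
    exact sum_congr rfl fun _ _ => by ring

lemma Pop_bern (hE : IsUnit (Esub mk mr a b).det) (j : Fin (mk + 1)) :
    Pop mk mr a b (bern mk a b j) = bern mk a b j := by
  ext x
  calc Pop mk mr a b (bern mk a b j) x
      = ∑ l : Fin (mk + 1), ((Esub mk mr a b)⁻¹ * Esub mk mr a b) l j * bern mk a b l x := by
        simp only [Pop, Dq, mul_apply, mul_sum, sum_mul]
        rw [sum_comm]
        exact sum_congr rfl fun _ _ => sum_congr rfl fun _ _ => by simp only [Esub, Emat, mu]; ring
    _ = bern mk a b j x := by simp [nonsing_inv_mul _ hE, one_apply]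

lemma polyF_le_span_bern (hab : a < b) (m : ℕ) :
    polyF m ≤ Submodule.span ℝ (Set.range fun j : Fin (m + 1) => bern m a b j) := by
  have hpow : ∀ t ≤ m, (fun x => ((x - a) / (b - a)) ^ t) ∈
      Submodule.span ℝ (Set.range fun j : Fin (m + 1) => bern m a b j) := by
    intro t ht
    rw [pow_eq_sum_bern hab ht]
    exact Submodule.sum_mem _ fun j _ => Submodule.smul_mem _ _ (Submodule.subset_span ⟨j, rfl⟩)
  refine Submodule.span_le.mpr ?_
  rintro _ ⟨i, hi, rfl⟩
  have : (fun x : ℝ => x ^ i) = ∑ u ∈ range (i + 1),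
      ((b - a) ^ u * a ^ (i - u) * (i.choose u : ℝ)) • fun x => ((x - a) / (b - a)) ^ u := by
    ext x
    have hx : x = (b - a) * ((x - a) / (b - a)) + a := by field_simp [sub_ne_zero.mpr hab.ne']; ring
    rw [Finset.sum_apply]
    conv_lhs => rw [hx, add_pow]
    exact sum_congr rfl fun u _ => by simp only [Pi.smul_apply, smul_eq_mul, mul_pow]; ring
  rw [this]
  exact Submodule.sum_mem _ fun u hu => Submodule.smul_mem _ _ (hpow u (by
    have := mem_range.mp hu; omega))

lemma Pop_eq_self_of_mem_polyF (hab : a < b) (hdvd : mk ∣ mr) (hmr : 0 < mr) {f : ℝ → ℝ}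
    (hf : f ∈ polyF mk) : Pop mk mr a b f = f := by
  have : Submodule.span ℝ (Set.range fun j : Fin (mk + 1) => bern mk a b j) ≤
      LinearMap.eqLocus (quasiInterp mk mr a b) LinearMap.id := by
    refine Submodule.span_le.mpr ?_
    rintro _ ⟨j, rfl⟩
    exact Pop_bern (isUnit_det_Esub hab hdvd hmr) j
  exact this (polyF_le_span_bern hab mk hf)

lemma exists_isOpBound_Pop (hab : a ≤ b) :
    ∃ C, IsOpBound (Set.Icc a b) (Pop mk mr a b) C := by
  have hcont : Continuous fun x => ∑ i' : Fin (mr + 1), |popWeight mk mr a b i' x| :=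
    continuous_finsetSum _ fun i' _ => (continuous_popWeight i').abs
  obtain ⟨C, hC⟩ :=
    (isCompact_Icc (a := a) (b := b)).exists_bound_of_continuousOn hcont.continuousOn
  refine ⟨C, fun f M hf x hx => ?_⟩
  have hM : 0 ≤ M := (abs_nonneg _).trans (hf a (Set.left_mem_Icc.mpr hab))
  calc |Pop mk mr a b f x|
      ≤ ∑ i' : Fin (mr + 1), |popWeight mk mr a b i' x| * M := by
        rw [Pop_eq_sum_node]
        refine (abs_sum_le_sum_abs _ _).trans (sum_le_sum fun i' _ => ?_)
        rw [abs_mul]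
        exact mul_le_mul_of_nonneg_left (hf _ (node_mem_Icc hab (Fin.is_le i'))) (abs_nonneg _)
    _ ≤ C * M := by
        rw [← sum_mul]
        exact mul_le_mul_of_nonneg_right ((le_abs_self _).trans (hC x hx)) hM

end QuasiInterpolant

section Bivariate

variable {a b c d : ℝ} {mk mr nl nr : ℕ}

noncomputable def quasiInterpX (mk mr : ℕ) (a b : ℝ) : (ℝ × ℝ → ℝ) →ₗ[ℝ] ℝ × ℝ → ℝ where
  toFun := PP mk mr a b
  map_add' _ _ := funext fun z => congrFun (map_add (quasiInterp mk mr a b) _ _) z.1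
  map_smul' r _ := funext fun z => congrFun (map_smul (quasiInterp mk mr a b) r _) z.1

noncomputable def quasiInterpY (nl nr : ℕ) (c d : ℝ) : (ℝ × ℝ → ℝ) →ₗ[ℝ] ℝ × ℝ → ℝ where
  toFun := QQ nl nr c d
  map_add' _ _ := funext fun z => congrFun (map_add (quasiInterp nl nr c d) _ _) z.2
  map_smul' r _ := funext fun z => congrFun (map_smul (quasiInterp nl nr c d) r _) z.2

noncomputable def quasiInterpBoolSum (mk mr nl nr : ℕ) (a b c d : ℝ) :
    (ℝ × ℝ → ℝ) →ₗ[ℝ] ℝ × ℝ → ℝ :=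
  quasiInterpX mk mr a b + quasiInterpY nl nr c d - quasiInterpX mk mr a b ∘ₗ quasiInterpY nl nr c d

lemma coe_quasiInterpBoolSum : ⇑(quasiInterpBoolSum mk mr nl nr a b c d) =
    fun G z => PP mk mr a b G z + QQ nl nr c d G z - PP mk mr a b (QQ nl nr c d G) z :=
  rfl

lemma exists_isOpBound_PP (hab : a ≤ b) : ∃ C, IsOpBound (Rect a b c d) (PP mk mr a b) C := by
  obtain ⟨C, hC⟩ := exists_isOpBound_Pop (mk := mk) (mr := mr) hab
  exact ⟨C, fun F M hF z hz => hC _ M (fun u hu => hF (u, z.2) ⟨hu, hz.2⟩) z.1 hz.1⟩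

lemma exists_isOpBound_QQ (hcd : c ≤ d) : ∃ C, IsOpBound (Rect a b c d) (QQ nl nr c d) C := by
  obtain ⟨C, hC⟩ := exists_isOpBound_Pop (mk := nl) (mr := nr) hcd
  exact ⟨C, fun F M hF z hz => hC _ M (fun u hu => hF (z.1, u) ⟨hz.1, hu⟩) z.2 hz.2⟩

lemma exists_isOpBound_quasiInterpBoolSum (hab : a ≤ b) (hcd : c ≤ d) :
    ∃ C, IsOpBound (Rect a b c d) (quasiInterpBoolSum mk mr nl nr a b c d) C := by
  obtain ⟨C₁, h₁⟩ := exists_isOpBound_PP (c := c) (d := d) (mk := mk) (mr := mr) hab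
  obtain ⟨C₂, h₂⟩ := exists_isOpBound_QQ (a := a) (b := b) (nl := nl) (nr := nr) hcd
  exact ⟨_, (h₁.add h₂).sub (h₁.comp h₂)⟩

lemma PP_eq_self (hab : a < b) (hdvd : mk ∣ mr) (hmr : 0 < mr) {U : ℝ × ℝ → ℝ}
    (hU : ∀ y, (fun x => U (x, y)) ∈ polyF mk) : PP mk mr a b U = U :=
  funext fun z => congrFun (Pop_eq_self_of_mem_polyF hab hdvd hmr (hU z.2)) z.1

lemma QQ_eq_self (hcd : c < d) (hdvd : nl ∣ nr) (hnr : 0 < nr) {V : ℝ × ℝ → ℝ}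
    (hV : ∀ x, (fun y => V (x, y)) ∈ polyF nl) : QQ nl nr c d V = V :=
  funext fun z => congrFun (Pop_eq_self_of_mem_polyF hcd hdvd hnr (hV z.1)) z.2

lemma QQ_section_mem {m : ℕ} {U : ℝ × ℝ → ℝ} (hU : ∀ y, (fun x => U (x, y)) ∈ polyF m) (y : ℝ) :
    (fun x => QQ nl nr c d U (x, y)) ∈ polyF m := by
  have : (fun x => QQ nl nr c d U (x, y)) =
      ∑ j' : Fin (nr + 1), popWeight nl nr c d j' y • fun x => U (x, node nr c d j') := by
    ext x
    simp [QQ, Pop_eq_sum_node]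
  rw [this]
  exact Submodule.sum_mem _ fun j' _ => Submodule.smul_mem _ _ (hU _)

lemma quasiInterpBoolSum_add_eq (hab : a < b) (hcd : c < d) (hmdvd : mk ∣ mr) (hmr : 0 < mr)
    (hndvd : nl ∣ nr) (hnr : 0 < nr) {U V : ℝ × ℝ → ℝ}
    (hU : ∀ y, (fun x => U (x, y)) ∈ polyF mk) (hV : ∀ x, (fun y => V (x, y)) ∈ polyF nl) :
    quasiInterpBoolSum mk mr nl nr a b c d (U + V) = U + V := by
  have hPU : quasiInterpX mk mr a b U = U := PP_eq_self hab hmdvd hmr hU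
  have hQV : quasiInterpY nl nr c d V = V := QQ_eq_self hcd hndvd hnr hV
  have hPQU : quasiInterpX mk mr a b (quasiInterpY nl nr c d U) = quasiInterpY nl nr c d U :=
    PP_eq_self hab hmdvd hmr (QQ_section_mem hU)
  simp only [quasiInterpBoolSum, LinearMap.sub_apply, LinearMap.add_apply, LinearMap.comp_apply,
    map_add, hPU, hQV, hPQU]
  abel

end Bivariate

section Taylor

/-- The Taylor polynomial with `p` terms at `t₀` of a function whose `i`-th derivative is `f i`. -/
noncomputable def taylorSum (f : ℕ → ℝ → ℝ) (p : ℕ) (t₀ t : ℝ) : ℝ :=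
  ∑ i ∈ range p, f i t₀ * (t - t₀) ^ i / i.factorial

lemma taylorSum_self (f : ℕ → ℝ → ℝ) (p : ℕ) (t₀ : ℝ) : taylorSum f (p + 1) t₀ t₀ = f 0 t₀ := by
  simp [taylorSum, sum_range_succ']

lemma hasDerivAt_taylorSum (f : ℕ → ℝ → ℝ) (p : ℕ) (t₀ t : ℝ) :
    HasDerivAt (taylorSum f (p + 1) t₀) (taylorSum (fun i => f (i + 1)) p t₀ t) t := by
  have h : ∀ i ∈ range (p + 1), HasDerivAt (fun t => f i t₀ * (t - t₀) ^ i / i.factorial)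
      (f i t₀ * (i * (t - t₀) ^ (i - 1) * 1) / i.factorial) t := fun i _ =>
    ((((hasDerivAt_id t).sub_const t₀).pow i).const_mul _).div_const _
  refine (HasDerivAt.fun_sum h).congr_deriv ?_
  rw [sum_range_succ', taylorSum]
  simp only [CharP.cast_eq_zero, zero_mul, mul_zero, zero_div, add_zero]
  refine sum_congr rfl fun i _ => ?_
  rw [Nat.factorial_succ, Nat.add_sub_cancel]
  push_cast
  field_simp

lemma abs_sub_taylorSum_le_of_left {a b M : ℝ} {p : ℕ} {f : ℕ → ℝ → ℝ}
    (hf : ∀ i < p, ∀ u ∈ Set.Icc a b, HasDerivWithinAt (f i) (f (i + 1) u) (Set.Icc a b) u)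
    (hM : ∀ u ∈ Set.Icc a b, |f p u| ≤ M) {t : ℝ} (ht : t ∈ Set.Icc a b) :
    |f 0 t - taylorSum f p a t| ≤ M * (t - a) ^ p / p.factorial := by
  induction p generalizing f t with
  | zero => simpa [taylorSum] using hM t ht
  | succ p ih =>
    have hR : ∀ u ∈ Set.Icc a b, HasDerivWithinAt (fun u => f 0 u - taylorSum f (p + 1) a u)
        (f 1 u - taylorSum (fun i => f (i + 1)) p a u) (Set.Icc a b) u := fun u hu =>
      (hf 0 (Nat.succ_pos p) u hu).sub (hasDerivAt_taylorSum f p a u).hasDerivWithinAt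
    have hB : ∀ x, HasDerivAt (fun u => M * (u - a) ^ (p + 1) / (p + 1).factorial)
        (M * (x - a) ^ p / p.factorial) x := by
      intro x
      refine ((((hasDerivAt_id x).sub_const a).pow (p + 1)).const_mul M).div_const _
        |>.congr_deriv ?_
      rw [id_eq, Nat.factorial_succ, Nat.add_sub_cancel]
      push_cast
      field_simp
    have key := image_norm_le_of_norm_deriv_right_le_deriv_boundary
      (fun u hu => (hR u hu).continuousWithinAt)
      (fun x hx => (hR x (Set.Ico_subset_Icc_self hx)).mono_of_mem_nhdsWithin
        (Icc_mem_nhdsGE_of_mem hx))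
      (by simp [taylorSum_self]) hB
      (fun x hx => by
        simpa [Real.norm_eq_abs] using ih (fun i hi u hu => hf (i + 1) (by omega) u hu) hM
          (Set.Ico_subset_Icc_self hx)) ht
    simpa [Real.norm_eq_abs] using key

lemma abs_sub_taylorSum_le {α β t₀ M : ℝ} {p : ℕ} {f : ℕ → ℝ → ℝ} (ht₀ : t₀ ∈ Set.Icc α β)
    (hf : ∀ i < p, ∀ u ∈ Set.Icc α β, HasDerivWithinAt (f i) (f (i + 1) u) (Set.Icc α β) u)
    (hM : ∀ u ∈ Set.Icc α β, |f p u| ≤ M) {t : ℝ} (ht : t ∈ Set.Icc α β) :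
    |f 0 t - taylorSum f p t₀ t| ≤ M * |t - t₀| ^ p / p.factorial := by
  rcases le_total t₀ t with h | h
  · rw [abs_of_nonneg (sub_nonneg.mpr h)]
    exact abs_sub_taylorSum_le_of_left
      (fun i hi u hu => (hf i hi u ⟨ht₀.1.trans hu.1, hu.2⟩).mono (Set.Icc_subset_Icc_left ht₀.1))
      (fun u hu => hM u ⟨ht₀.1.trans hu.1, hu.2⟩) ⟨h, ht.2⟩
  -- For `t ≤ t₀` expand `u ↦ f 0 (-u)` from the left endpoint `-t₀` of `[-t₀, -α]`.
  set g : ℕ → ℝ → ℝ := fun i u => (-1) ^ i * f i (-u)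
  have hmem : ∀ u ∈ Set.Icc (-t₀) (-α), -u ∈ Set.Icc α β := fun u hu =>
    ⟨by linarith [hu.2], by linarith [hu.1, ht₀.2]⟩
  have hg : ∀ i < p, ∀ u ∈ Set.Icc (-t₀) (-α),
      HasDerivWithinAt (g i) (g (i + 1) u) (Set.Icc (-t₀) (-α)) u := by
    intro i hi u hu
    have h1 := (hf i hi (-u) (hmem u hu)).comp u (hasDerivAt_neg u).hasDerivWithinAt hmem
    exact (h1.const_mul ((-1 : ℝ) ^ i)).congr_deriv (by simp only [g, pow_succ]; ring)
  have hsq : ∀ i : ℕ, ((-1 : ℝ) ^ i) * (-1) ^ i = 1 := fun i => by rw [← mul_pow]; norm_num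
  have hT : taylorSum g p (-t₀) (-t) = taylorSum f p t₀ t := by
    refine sum_congr rfl fun i _ => ?_
    simp only [g, neg_neg, show -t - -t₀ = -1 * (t - t₀) by ring, mul_pow]
    linear_combination (f i t₀ * (t - t₀) ^ i / i.factorial) * hsq i
  have := abs_sub_taylorSum_le_of_left hg (fun u hu => by simpa [g, abs_mul] using hM _ (hmem u hu))
    (t := -t) ⟨by linarith, by linarith [ht.1]⟩
  rw [abs_of_nonpos (sub_nonpos.mpr h), neg_sub]
  simpa [g, hT, show -t - -t₀ = t₀ - t by ring] using this

lemma pow_sub_mem_polyF {m i : ℕ} (hi : i ≤ m) (t₀ : ℝ) : (fun t => (t - t₀) ^ i) ∈ polyF m := by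
  have : (fun t => (t - t₀) ^ i) =
      ∑ u ∈ range (i + 1), ((-t₀) ^ (i - u) * (i.choose u : ℝ)) • fun t : ℝ => t ^ u := by
    ext t
    simp only [sub_eq_add_neg, add_pow, Finset.sum_apply, Pi.smul_apply, smul_eq_mul]
    exact sum_congr rfl fun _ _ => by ring
  rw [this]
  exact Submodule.sum_mem _ fun u hu => Submodule.smul_mem _ _
    (Submodule.subset_span ⟨u, by have := mem_range.mp hu; omega, rfl⟩)

lemma taylorSum_mem_polyF (f : ℕ → ℝ → ℝ) (m : ℕ) (t₀ : ℝ) :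
    (fun t => taylorSum f (m + 1) t₀ t) ∈ polyF m := by
  have : (fun t => taylorSum f (m + 1) t₀ t) =
      ∑ i ∈ range (m + 1), (f i t₀ / i.factorial) • fun t => (t - t₀) ^ i := by
    ext t
    simp only [taylorSum, Finset.sum_apply, Pi.smul_apply, smul_eq_mul]
    exact sum_congr rfl fun _ _ => by ring
  rw [this]
  exact Submodule.sum_mem _ fun i hi => Submodule.smul_mem _ _
    (pow_sub_mem_polyF (Nat.lt_succ_iff.mp (mem_range.mp hi)) t₀)

end Taylor

section Blending

variable {a b c d x₀ y₀ : ℝ} {m n : ℕ} {Fd : ℕ → ℕ → ℝ × ℝ → ℝ}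

noncomputable def taylorY (Fd : ℕ → ℕ → ℝ × ℝ → ℝ) (n : ℕ) (y₀ : ℝ) (i : ℕ) : ℝ × ℝ → ℝ :=
  fun z => taylorSum (fun j y => Fd i j (z.1, y)) (n + 1) y₀ z.2

/-- The Boolean sum `(T_x ⊕ T_y) F = T_y F + T_x (F - T_y F)` of the Taylor projectors of
degrees `m` in `x` and `n` in `y` at `(x₀, y₀)`, where `F^{(i,j)} = Fd i j`. -/
noncomputable def taylorBoolSum (Fd : ℕ → ℕ → ℝ × ℝ → ℝ) (m n : ℕ) (x₀ y₀ : ℝ) : ℝ × ℝ → ℝ :=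
  (fun z => taylorSum (fun i x => Fd i 0 (x, z.2) - taylorY Fd n y₀ i (x, z.2)) (m + 1) x₀ z.1) +
    taylorY Fd n y₀ 0

lemma hasDerivWithinAt_taylorY (hF : IsCpq (m + 1) (n + 1) a b c d Fd) (hy₀ : y₀ ∈ Set.Icc c d)
    {i : ℕ} (hi : i < m + 1) {z : ℝ × ℝ} (hz : z ∈ Rect a b c d) :
    HasDerivWithinAt (fun x => taylorY Fd n y₀ i (x, z.2)) (taylorY Fd n y₀ (i + 1) z)
      (Set.Icc a b) z.1 := by
  show HasDerivWithinAt
    (fun x => ∑ j ∈ range (n + 1), Fd i j (x, y₀) * (z.2 - y₀) ^ j / j.factorial)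
    (∑ j ∈ range (n + 1), Fd (i + 1) j (z.1, y₀) * (z.2 - y₀) ^ j / j.factorial) (Set.Icc a b) z.1
  refine HasDerivWithinAt.fun_sum fun j hj => ?_
  have hj : j ≤ n + 1 := by have := mem_range.mp hj; omega
  exact ((hF.1 i hi j hj (z.1, y₀) ⟨hz.1, hy₀⟩).mul_const _).div_const _

lemma abs_sub_taylorBoolSum_le (hF : IsCpq (m + 1) (n + 1) a b c d Fd) (hx₀ : x₀ ∈ Set.Icc a b)
    (hy₀ : y₀ ∈ Set.Icc c d) {A : ℝ} (hA : ∀ z ∈ Rect a b c d, |Fd (m + 1) (n + 1) z| ≤ A)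
    {z : ℝ × ℝ} (hz : z ∈ Rect a b c d) :
    |Fd 0 0 z - taylorBoolSum Fd m n x₀ y₀ z| ≤
      A * |z.2 - y₀| ^ (n + 1) / (n + 1).factorial * |z.1 - x₀| ^ (m + 1) / (m + 1).factorial := by
  set G : ℕ → ℝ → ℝ := fun i x => Fd i 0 (x, z.2) - taylorY Fd n y₀ i (x, z.2)
  have hG : ∀ i < m + 1, ∀ x ∈ Set.Icc a b, HasDerivWithinAt (G i) (G (i + 1) x) (Set.Icc a b) x :=
    fun i hi x hx => (hF.1 i hi 0 (Nat.zero_le _) (x, z.2) ⟨hx, hz.2⟩).sub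
      (hasDerivWithinAt_taylorY hF hy₀ hi (z := (x, z.2)) ⟨hx, hz.2⟩)
  have hGtop : ∀ x ∈ Set.Icc a b, |G (m + 1) x| ≤ A * |z.2 - y₀| ^ (n + 1) / (n + 1).factorial :=
    fun x hx => abs_sub_taylorSum_le hy₀ (f := fun j y => Fd (m + 1) j (x, y))
      (fun j hj y hy => hF.2.1 (m + 1) le_rfl j hj (x, y) ⟨hx, hy⟩)
      (fun y hy => hA (x, y) ⟨hx, hy⟩) hz.2
  have h := abs_sub_taylorSum_le hx₀ hG hGtop hz.1
  have hsplit : Fd 0 0 z - taylorBoolSum Fd m n x₀ y₀ z = G 0 z.1 - taylorSum G (m + 1) x₀ z.1 := by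
    simp only [taylorBoolSum, Pi.add_apply, G]
    ring
  rwa [hsplit]

lemma ContinuousOn.comp_mk_const {f : ℝ × ℝ → ℝ} (hf : ContinuousOn f (Rect a b c d))
    (hy₀ : y₀ ∈ Set.Icc c d) : ContinuousOn (fun z => f (z.1, y₀)) (Rect a b c d) :=
  hf.comp (by fun_prop) fun z hz => ⟨hz.1, hy₀⟩

lemma ContinuousOn.comp_const_mk {f : ℝ × ℝ → ℝ} (hf : ContinuousOn f (Rect a b c d))
    (hx₀ : x₀ ∈ Set.Icc a b) : ContinuousOn (fun z => f (x₀, z.2)) (Rect a b c d) :=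
  hf.comp (by fun_prop) fun z hz => ⟨hx₀, hz.2⟩

lemma continuousOn_taylorY (hF : IsCpq (m + 1) (n + 1) a b c d Fd) (hy₀ : y₀ ∈ Set.Icc c d)
    {i : ℕ} (hi : i ≤ m + 1) : ContinuousOn (taylorY Fd n y₀ i) (Rect a b c d) := by
  show ContinuousOn
    (fun z : ℝ × ℝ => ∑ j ∈ range (n + 1), Fd i j (z.1, y₀) * (z.2 - y₀) ^ j / j.factorial) _
  exact continuousOn_finsetSum _ fun j hj =>
    (((hF.2.2 i hi j (by have := mem_range.mp hj; omega)).comp_mk_const hy₀).mul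
      (by fun_prop)).div_const _

lemma continuousOn_taylorBoolSum (hF : IsCpq (m + 1) (n + 1) a b c d Fd) (hx₀ : x₀ ∈ Set.Icc a b)
    (hy₀ : y₀ ∈ Set.Icc c d) : ContinuousOn (taylorBoolSum Fd m n x₀ y₀) (Rect a b c d) := by
  refine ContinuousOn.add (continuousOn_finsetSum _ fun i hi => ?_)
    (continuousOn_taylorY hF hy₀ (by omega))
  have hi : i ≤ m + 1 := by have := mem_range.mp hi; omega
  exact ((((hF.2.2 i hi 0 (Nat.zero_le _)).sub (continuousOn_taylorY hF hy₀ hi)).comp_const_mk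
    hx₀).mul (by fun_prop)).div_const _

lemma quasiInterpBoolSum_taylorBoolSum {mk mr nl nr : ℕ} (hab : a < b) (hcd : c < d)
    (hmdvd : mk ∣ mr) (hmr : 0 < mr) (hndvd : nl ∣ nr) (hnr : 0 < nr) :
    quasiInterpBoolSum mk mr nl nr a b c d (taylorBoolSum Fd mk nl x₀ y₀) =
      taylorBoolSum Fd mk nl x₀ y₀ := by
  have hV : ∀ x, (fun y => taylorY Fd nl y₀ 0 (x, y)) ∈ polyF nl := fun x => by
    unfold taylorY
    exact taylorSum_mem_polyF (fun j y => Fd 0 j (x, y)) nl y₀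
  unfold taylorBoolSum
  exact quasiInterpBoolSum_add_eq hab hcd hmdvd hmr hndvd hnr
    (fun y => taylorSum_mem_polyF (fun i x => Fd i 0 (x, y) - taylorY Fd nl y₀ i (x, y)) mk x₀) hV

lemma abs_sub_taylorBoolSum_center_le (hF : IsCpq (m + 1) (n + 1) a b c d Fd)
    (hsq : b - a = d - c) {A : ℝ} (hA0 : 0 ≤ A)
    (hA : ∀ z ∈ Rect a b c d, |Fd (m + 1) (n + 1) z| ≤ A) {z : ℝ × ℝ} (hz : z ∈ Rect a b c d) :
    |Fd 0 0 z - taylorBoolSum Fd m n ((a + b) / 2) ((c + d) / 2) z| ≤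
      A * (b - a) ^ (m + n + 2) / (2 ^ (m + n + 2) * (m + 1).factorial * (n + 1).factorial) := by
  have ⟨⟨hax, hxb⟩, hcy, hyd⟩ := hz
  have hzx : |z.1 - (a + b) / 2| ≤ (b - a) / 2 := abs_le.mpr ⟨by linarith, by linarith⟩
  have hzy : |z.2 - (c + d) / 2| ≤ (b - a) / 2 := abs_le.mpr ⟨by linarith, by linarith⟩
  calc _ ≤ A * |z.2 - (c + d) / 2| ^ (n + 1) / (n + 1).factorial *
        |z.1 - (a + b) / 2| ^ (m + 1) / (m + 1).factorial :=
        abs_sub_taylorBoolSum_le hF ⟨by linarith, by linarith⟩ ⟨by linarith, by linarith⟩ hA hz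
    _ ≤ A * ((b - a) / 2) ^ (n + 1) / (n + 1).factorial *
        ((b - a) / 2) ^ (m + 1) / (m + 1).factorial := by
        have : 0 ≤ (b - a) / 2 := by linarith
        gcongr
    _ = _ := by
        rw [div_pow, div_pow]
        field_simp
        ring

end Blending

lemma dvd_of_forall_dvd_succ {m : ℕ → ℕ} {r : ℕ} (hmd : ∀ k < r, m k ∣ m (k + 1)) {k : ℕ}
    (hk : k ≤ r) : m k ∣ m r :=
  Nat.le_induction (P := fun j _ => j ≤ r → m k ∣ m j) (fun _ => dvd_rfl)
    (fun j _ ih hj => (ih (by omega)).trans (hmd j (by omega))) r hk le_rfl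

lemma pos_of_forall_lt_succ {m : ℕ → ℕ} {r : ℕ} (hm0 : 0 < m 0)
    (hmi : ∀ k < r, m k < m (k + 1)) : ∀ k ≤ r, 0 < m k
  | 0, _ => hm0
  | k + 1, hk => (pos_of_forall_lt_succ hm0 hmi k (by omega)).trans (hmi k (by omega))

/-- Error of the Boolean sum `𝐏_{m_k} ⊕ 𝐐_{n_ℓ}` for `F ∈ C^{m_k+1,n_ℓ+1}`:
`‖F − (𝐏_{m_k} ⊕ 𝐐_{n_ℓ})F‖_∞ ≤ K_{m_k,n_ℓ}(F)·h^{m_k+n_ℓ+2}`. -/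
theorem stmt16 (a b c d : ℝ) (hab : a < b) (hcd : c < d) (r : ℕ) (m n : ℕ → ℕ)
    (hm0 : 0 < m 0) (hn0 : 0 < n 0)
    (hmi : ∀ k < r, m k < m (k + 1)) (hni : ∀ k < r, n k < n (k + 1))
    (hmd : ∀ k < r, m k ∣ m (k + 1)) (hnd : ∀ k < r, n k ∣ n (k + 1))
    (hsq : b - a = d - c) (k l : ℕ) (hk : k ≤ r) (hl : l ≤ r)
    (Fd : ℕ → ℕ → ℝ × ℝ → ℝ) (hF : IsCpq (m k + 1) (n l + 1) a b c d Fd) :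
    supN (Rect a b c d)
        (fun z => Fd 0 0 z -
          (PP (m k) (m r) a b (Fd 0 0) z + QQ (n l) (n r) c d (Fd 0 0) z -
            PP (m k) (m r) a b (QQ (n l) (n r) c d (Fd 0 0)) z)) ≤
      (1 + opN (Rect a b c d)
            (fun G z => PP (m k) (m r) a b G z + QQ (n l) (n r) c d G z -
              PP (m k) (m r) a b (QQ (n l) (n r) c d G) z)) *
          supN (Rect a b c d) (Fd (m k + 1) (n l + 1)) /
          ((2 : ℝ) ^ (m k + n l + 2) * ((m k + 1).factorial : ℝ) *
            ((n l + 1).factorial : ℝ)) *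
        (b - a) ^ (m k + n l + 2) := by
  have hR : IsCompact (Rect a b c d) := isCompact_Icc.prod isCompact_Icc
  have hA0 := supN_nonneg (Rect a b c d) (Fd (m k + 1) (n l + 1))
  obtain ⟨C, hC⟩ := exists_isOpBound_quasiInterpBoolSum (mk := m k) (mr := m r) (nl := n l)
    (nr := n r) hab.le hcd.le
  have hS := quasiInterpBoolSum_taylorBoolSum (Fd := Fd) (x₀ := (a + b) / 2) (y₀ := (c + d) / 2)
    hab hcd (dvd_of_forall_dvd_succ hmd hk) (pos_of_forall_lt_succ hm0 hmi r le_rfl)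
    (dvd_of_forall_dvd_succ hnd hl) (pos_of_forall_lt_succ hn0 hni r le_rfl)
  have hcont := (hF.2.2 0 (Nat.zero_le _) 0 (Nat.zero_le _)).sub
    (continuousOn_taylorBoolSum hF (x₀ := (a + b) / 2) (y₀ := (c + d) / 2)
      ⟨by linarith, by linarith⟩ ⟨by linarith, by linarith⟩)
  have key := supN_sub_le_of_apply_eq_self hR _ hC hS hcont (by positivity)
    fun z hz => abs_sub_taylorBoolSum_center_le hF hsq hA0
      (fun w hw => abs_le_supN_of_continuousOn hR (hF.2.2 _ le_rfl _ le_rfl) hw) hz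
  rw [coe_quasiInterpBoolSum] at key
  refine key.trans_eq ?_
  ring
end

section
/- With the conventions 𝐏_{m_{−1}} := 0 and 𝐐_{n_{−1}} := 0 (the projectors onto the trivial space), and writing L^c := I − L for an operator L on C([a,b]×[c,d]), the complement of the discrete blending operator 𝐁_{𝐦,𝐧} := Σ_{k=0}^r 𝐏_{m_k}𝐐_{n_{r−k}} − Σ_{k=0}^{r−1} 𝐏_{m_k}𝐐_{n_{r−k−1}} satisfies I − 𝐁_{𝐦,𝐧} = Σ_{k=0}^{r+1} 𝐏_{m_{k−1}}^c 𝐐_{n_{r−k}}^c − Σ_{k=0}^{r} 𝐏_{m_k}^c 𝐐_{n_{r−k}}^c. -/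
open scoped BigOperators

noncomputable section

/-- Extended family of projectors: `𝐏E 0 = 𝐏_{m_{−1}} := 0` and `𝐏E (k+1) = 𝐏_{m_k}`. -/
def PPE (r : ℕ) (m : ℕ → ℕ) (a b : ℝ) : ℕ → (ℝ × ℝ → ℝ) → ℝ × ℝ → ℝ
  | 0 => fun _ => 0
  | k + 1 => PP (m k) (m r) a b

/-- Extended family of projectors: `𝐐E 0 = 𝐐_{n_{−1}} := 0` and `𝐐E (k+1) = 𝐐_{n_k}`. -/
def QQE (r : ℕ) (n : ℕ → ℕ) (c d : ℝ) : ℕ → (ℝ × ℝ → ℝ) → ℝ × ℝ → ℝ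
  | 0 => fun _ => 0
  | k + 1 => QQ (n k) (n r) c d

/-- Shifted degrees: `mE 0 = m_{−1} + 1 = 0` and `mE (k+1) = m_k + 1`. -/
def mE (m : ℕ → ℕ) : ℕ → ℕ
  | 0 => 0
  | k + 1 => m k + 1

end

/-- With `𝐏_{m_{−1}} := 0`, `𝐐_{n_{−1}} := 0` and `L^c := I − L`, the
complement of `𝐁_{𝐦,𝐧}` satisfies
`I − 𝐁_{𝐦,𝐧} = Σ_{k=0}^{r+1} 𝐏^c_{m_{k−1}}𝐐^c_{n_{r−k}} − Σ_{k=0}^r 𝐏^c_{m_k}𝐐^c_{n_{r−k}}`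
(here the index shift `𝐏E k = 𝐏_{m_{k−1}}`, `𝐐E j = 𝐐_{n_{j−1}}` encodes the `−1` indices). -/
theorem stmt17 (a b c d : ℝ) (hab : a < b) (hcd : c < d) (r : ℕ) (m n : ℕ → ℕ)
    (hm0 : 0 < m 0) (hn0 : 0 < n 0)
    (hmi : ∀ k < r, m k < m (k + 1)) (hni : ∀ k < r, n k < n (k + 1))
    (hmd : ∀ k < r, m k ∣ m (k + 1)) (hnd : ∀ k < r, n k ∣ n (k + 1)) :
    ∀ F : ℝ × ℝ → ℝ, ContinuousOn F (Rect a b c d) → ∀ z ∈ Rect a b c d,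
      F z -
          ((∑ k ∈ Finset.range (r + 1),
              PP (m k) (m r) a b (QQ (n (r - k)) (n r) c d F) z) -
            ∑ k ∈ Finset.range r,
              PP (m k) (m r) a b (QQ (n (r - k - 1)) (n r) c d F) z) =
        (∑ k ∈ Finset.range (r + 2),
            (F z - PPE r m a b k F z - QQE r n c d (r + 1 - k) F z +
              PPE r m a b k (QQE r n c d (r + 1 - k) F) z)) -
          ∑ k ∈ Finset.range (r + 1),
            (F z - PPE r m a b (k + 1) F z - QQE r n c d (r + 1 - k) F z +
              PPE r m a b (k + 1) (QQE r n c d (r + 1 - k) F) z) := by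
  intro F _ z _
  have Pz : ∀ k, PP (m k) (m r) a b (fun _ => (0:ℝ)) z = 0 := by
    intro k
    simp [PP, Pop, mu, lam, Matrix.mulVec, dotProduct]
  have key1 : ∑ k ∈ Finset.range (r + 1),
      PPE r m a b (k + 1) (QQE r n c d (r + 1 - k) F) z
      = ∑ k ∈ Finset.range (r + 1),
        PP (m k) (m r) a b (QQ (n (r - k)) (n r) c d F) z := by
    apply Finset.sum_congr rfl
    intro k hk
    have hk' : k ≤ r := Nat.lt_succ_iff.mp (Finset.mem_range.mp hk)
    have h : r + 1 - k = (r - k) + 1 := by omega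
    rw [h]; rfl
  have key2 : ∑ k ∈ Finset.range (r + 2),
      PPE r m a b k (QQE r n c d (r + 1 - k) F) z
      = ∑ k ∈ Finset.range r,
        PP (m k) (m r) a b (QQ (n (r - k - 1)) (n r) c d F) z := by
    rw [Finset.sum_range_succ' (fun k => PPE r m a b k (QQE r n c d (r + 1 - k) F) z) (r + 1)]
    have h0 : PPE r m a b 0 (QQE r n c d (r + 1 - 0) F) z = 0 := rfl
    rw [h0, add_zero, Finset.sum_range_succ]
    have hr : PPE r m a b (r + 1) (QQE r n c d (r + 1 - (r + 1)) F) z = 0 := by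
      have h : r + 1 - (r + 1) = 0 := by omega
      rw [h]
      exact Pz r
    rw [hr, add_zero]
    apply Finset.sum_congr rfl
    intro k hk
    have hk' : k < r := Finset.mem_range.mp hk
    have h : r + 1 - (k + 1) = (r - k - 1) + 1 := by omega
    rw [h]; rfl
  have key3 : ∑ k ∈ Finset.range (r + 2), PPE r m a b k F z
      = ∑ k ∈ Finset.range (r + 1), PPE r m a b (k + 1) F z := by
    rw [Finset.sum_range_succ' (fun k => PPE r m a b k F z) (r + 1)]
    have h0 : PPE r m a b 0 F z = 0 := rfl
    rw [h0, add_zero]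
  have key4 : ∑ k ∈ Finset.range (r + 2), QQE r n c d (r + 1 - k) F z
      = ∑ k ∈ Finset.range (r + 1), QQE r n c d (r + 1 - k) F z := by
    rw [Finset.sum_range_succ]
    have h : r + 1 - (r + 1) = 0 := by omega
    rw [h]
    have h0 : QQE r n c d 0 F z = 0 := rfl
    rw [h0, add_zero]
  simp only [Finset.sum_add_distrib, Finset.sum_sub_distrib, Finset.sum_const,
    Finset.card_range, nsmul_eq_mul] at *
  rw [key1, key2, key3, key4]
  push_cast
  ring
end
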